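/- (Theorem 2, probabilistic form.) Consider the linear model Y = Xβ* + ε with Y ∈ ℝ^n, X ∈ ℝ^{n×p}, |supp(β*)| ≤ S, and ε independent mean-zero sub-Gaussian with variance proxy σ². Assume the maximum absolute column sum satisfies ‖X‖₁ ≤ C √n for some constant C > 0, and X satisfies the restricted eigenvalue condition with constant γ > 0 over the cone C(β*). Let α > 2 and λ₀ = σ √(α log p / n). Then with probability at least 1 − 2 n p^{−α/2}, every vector β̂ that is feasible for the constrained ℓ∞ problem with parameter λ₀ and satisfies ‖β̂‖₁ ≤ ‖β*‖₁ obeys ‖β̂ − β*‖₂ ≤ (4Cσ/γ) √(α S log p / n). -/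

import Mathlib

open MeasureTheory ProbabilityTheory Finset

/-- The maximum absolute entry of a vector in `ℝ^n`. -/
noncomputable def linftyNorm {n : ℕ} (v : Fin n → ℝ) : ℝ := ⨆ i, |v i|

/-- The maximum absolute column sum of a matrix `X ∈ ℝ^{n×p}`. -/
noncomputable def colSumNorm {n p : ℕ} (X : Matrix (Fin n) (Fin p) ℝ) : ℝ :=
  ⨆ j, ∑ i, |X i j|

/-- Membership in the cone `C(β*)`: `‖ν_{S₀ᶜ}‖₁ ≤ ‖ν_{S₀}‖₁`, `S₀ = supp(β*)`. -/
def inCone {p : ℕ} (βstar ν : Fin p → ℝ) : Prop :=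
  ∑ j ∈ Finset.univ.filter (fun j => βstar j = 0), |ν j|
    ≤ ∑ j ∈ Finset.univ.filter (fun j => βstar j ≠ 0), |ν j|

/-- Feasibility for the constrained ℓ∞ problem: `(1/√n) ‖Y − Xβ‖_∞ ≤ λ₀`. -/
noncomputable def feasible {n p : ℕ} (Y : Fin n → ℝ) (X : Matrix (Fin n) (Fin p) ℝ)
    (lam₀ : ℝ) (β : Fin p → ℝ) : Prop :=
  (1 / Real.sqrt n) * linftyNorm (fun i => Y i - X.mulVec β i) ≤ lam₀

/-! On the event that every noise coordinate satisfies `|εᵢ| ≤ σ √(α log p) = √n λ₀`, whose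
complement has probability at most `n · 2 p^{-α/2}` by the sub-Gaussian tail and a union bound,
`β*` is itself feasible. Then `ν = β̂ − β*` has `‖Xν‖_∞ ≤ 2 √n λ₀`, and `‖β̂‖₁ ≤ ‖β*‖₁` puts `ν`
in the cone, so that `‖ν‖₁ ≤ 2 ‖ν_{S₀}‖₁ ≤ 2 √S ‖ν‖₂`. The restricted eigenvalue condition and
`‖Xν‖₂² ≤ ‖Xν‖_∞ ‖Xν‖₁ ≤ ‖Xν‖_∞ ‖X‖₁ ‖ν‖₁` then give `γ ‖ν‖₂² ≤ 4 C λ₀ √S ‖ν‖₂`. -/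

open Matrix Real

section Deterministic

variable {n p : ℕ}

lemma linftyNorm_le_iff (hn : 0 < n) {v : Fin n → ℝ} {M : ℝ} :
    linftyNorm v ≤ M ↔ ∀ i, |v i| ≤ M :=
  have : Nonempty (Fin n) := ⟨⟨0, hn⟩⟩
  ciSup_le_iff (Set.finite_range _).bddAbove

lemma feasible_iff (hn : 0 < n) {Y : Fin n → ℝ} {X : Matrix (Fin n) (Fin p) ℝ} {lam₀ : ℝ}
    {β : Fin p → ℝ} : feasible Y X lam₀ β ↔ ∀ i, |Y i - (X *ᵥ β) i| ≤ √n * lam₀ := by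
  rw [feasible, one_div, inv_mul_le_iff₀ (by positivity), linftyNorm_le_iff hn]

lemma sum_abs_le_colSumNorm (X : Matrix (Fin n) (Fin p) ℝ) (j : Fin p) :
    ∑ i, |X i j| ≤ colSumNorm X :=
  le_ciSup (f := fun j ↦ ∑ i, |X i j|) (Set.finite_range _).bddAbove j

lemma colSumNorm_nonneg (X : Matrix (Fin n) (Fin p) ℝ) : 0 ≤ colSumNorm X :=
  Real.iSup_nonneg fun _ ↦ sum_nonneg fun _ _ ↦ abs_nonneg _

lemma sum_abs_mulVec_le (X : Matrix (Fin n) (Fin p) ℝ) (ν : Fin p → ℝ) :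
    ∑ i, |(X *ᵥ ν) i| ≤ colSumNorm X * ∑ j, |ν j| :=
  calc ∑ i, |(X *ᵥ ν) i| ≤ ∑ i, ∑ j, |X i j| * |ν j| := by
        gcongr with i
        simpa only [mulVec, dotProduct, abs_mul] using abs_sum_le_sum_abs (fun j ↦ X i j * ν j) univ
    _ = ∑ j, (∑ i, |X i j|) * |ν j| := by
        rw [sum_comm]
        simp_rw [sum_mul]
    _ ≤ ∑ j, colSumNorm X * |ν j| := by
        gcongr with j
        exact sum_abs_le_colSumNorm X j
    _ = colSumNorm X * ∑ j, |ν j| := (mul_sum ..).symm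

lemma sum_sq_le_mul_sum_abs {ι : Type*} (s : Finset ι) {v : ι → ℝ} {M : ℝ}
    (hM : ∀ i ∈ s, |v i| ≤ M) : ∑ i ∈ s, v i ^ 2 ≤ M * ∑ i ∈ s, |v i| := by
  rw [mul_sum]
  gcongr with i hi
  rw [← sq_abs, sq]
  exact mul_le_mul_of_nonneg_right (hM i hi) (abs_nonneg _)

lemma inCone_sub_of_sum_abs_le {βstar βhat : Fin p → ℝ}
    (hl1 : ∑ j, |βhat j| ≤ ∑ j, |βstar j|) : inCone βstar (βhat - βstar) := by
  have split (f : Fin p → ℝ) : ∑ j, f j =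
      ∑ j with βstar j ≠ 0, f j + ∑ j with βstar j = 0, f j := by
    simp only [← sum_filter_add_sum_filter_not univ (fun j ↦ βstar j ≠ 0), not_not]
  have off_support : ∀ j ∈ univ.filter (fun j ↦ βstar j = 0),
      |βhat j| = |(βhat - βstar) j| ∧ |βstar j| = 0 := by
    intro j hj
    simp [(mem_filter.1 hj).2]
  have on_support : ∀ j ∈ univ.filter (fun j ↦ βstar j ≠ 0),
      |βstar j| - |βhat j| ≤ |(βhat - βstar) j| := fun j _ ↦ by
    rw [Pi.sub_apply, abs_sub_comm]
    exact abs_sub_abs_le_abs_sub _ _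
  rw [split, split fun j ↦ |βstar j|, sum_congr rfl fun j hj ↦ (off_support j hj).1,
    sum_congr rfl fun j hj ↦ (off_support j hj).2] at hl1
  have := sum_le_sum on_support
  rw [sum_sub_distrib] at this
  unfold inCone
  simp only [sum_const_zero] at hl1
  linarith

lemma sum_abs_le_of_inCone {βstar ν : Fin p → ℝ} {S : ℕ}
    (hsparse : (Finset.univ.filter (fun j => βstar j ≠ 0)).card ≤ S) (hν : inCone βstar ν) :
    ∑ j, |ν j| ≤ 2 * √S * √(∑ j, ν j ^ 2) := by
  set A := univ.filter fun j ↦ βstar j ≠ 0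
  have cauchy_schwarz : ∑ j ∈ A, |ν j| ≤ √S * √(∑ j, ν j ^ 2) :=
    calc ∑ j ∈ A, |ν j| = ∑ j ∈ A, 1 * |ν j| := by simp only [one_mul]
      _ ≤ √(∑ j ∈ A, 1 ^ 2) * √(∑ j ∈ A, |ν j| ^ 2) := sum_mul_le_sqrt_mul_sqrt _ _ _
      _ ≤ √S * √(∑ j, ν j ^ 2) := by
        simp only [one_pow, sum_const, nsmul_eq_mul, mul_one, sq_abs]
        gcongr
        exact subset_univ _
  have split : ∑ j, |ν j| = ∑ j ∈ A, |ν j| + ∑ j with βstar j = 0, |ν j| := by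
    simp only [A, ← sum_filter_add_sum_filter_not univ (fun j ↦ βstar j ≠ 0), not_not]
  have : ∑ j with βstar j = 0, |ν j| ≤ ∑ j ∈ A, |ν j| := hν
  linarith

theorem sqrt_sum_sq_le_of_inCone (hn : 0 < n) {X : Matrix (Fin n) (Fin p) ℝ}
    {βstar ν : Fin p → ℝ} {S : ℕ} {γ M : ℝ}
    (hsparse : (Finset.univ.filter (fun j => βstar j ≠ 0)).card ≤ S) (hγ : 0 < γ)
    (hRE : ∀ ν : Fin p → ℝ, inCone βstar ν →
      γ * ∑ j, (ν j) ^ 2 ≤ (1 / (n : ℝ)) * ∑ i, (X.mulVec ν i) ^ 2)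
    (hν : inCone βstar ν) (hM : ∀ i, |(X *ᵥ ν) i| ≤ M) :
    √(∑ j, ν j ^ 2) ≤ 2 * M * colSumNorm X * √S / (n * γ) := by
  have hM0 : 0 ≤ M := (abs_nonneg _).trans (hM ⟨0, hn⟩)
  have hcol0 := colSumNorm_nonneg X
  set t := √(∑ j, ν j ^ 2)
  set c := 2 * M * colSumNorm X * √S / n
  have key : γ * t ^ 2 ≤ c * t :=
    calc γ * t ^ 2 = γ * ∑ j, ν j ^ 2 := by rw [sq_sqrt (by positivity)]
      _ ≤ 1 / n * ∑ i, (X *ᵥ ν) i ^ 2 := hRE ν hν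
      _ ≤ 1 / n * (M * (colSumNorm X * ∑ j, |ν j|)) := by
        gcongr
        exact (sum_sq_le_mul_sum_abs _ fun i _ ↦ hM i).trans
          (by gcongr; exact sum_abs_mulVec_le X ν)
      _ ≤ 1 / n * (M * (colSumNorm X * (2 * √S * t))) := by
        gcongr
        exact sum_abs_le_of_inCone hsparse hν
      _ = c * t := by ring
  rw [← div_div, le_div_iff₀ hγ]
  change t * γ ≤ c
  have hc : 0 ≤ c := by positivity
  nlinarith [sqrt_nonneg (∑ j, ν j ^ 2)]

theorem sqrt_sum_sq_sub_le_of_feasible (hn : 0 < n) {X : Matrix (Fin n) (Fin p) ℝ}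
    {βstar βhat : Fin p → ℝ} {Y : Fin n → ℝ} {S : ℕ} {C γ lam₀ : ℝ}
    (hsparse : (Finset.univ.filter (fun j => βstar j ≠ 0)).card ≤ S)
    (hcolsum : colSumNorm X ≤ C * √n) (hγ : 0 < γ)
    (hRE : ∀ ν : Fin p → ℝ, inCone βstar ν →
      γ * ∑ j, (ν j) ^ 2 ≤ (1 / (n : ℝ)) * ∑ i, (X.mulVec ν i) ^ 2)
    (hstar : feasible Y X lam₀ βstar) (hfeas : feasible Y X lam₀ βhat)
    (hl1 : ∑ j, |βhat j| ≤ ∑ j, |βstar j|) :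
    √(∑ j, (βhat j - βstar j) ^ 2) ≤ 4 * C * lam₀ * √S / γ := by
  rw [feasible_iff hn] at hstar hfeas
  have hresid (i : Fin n) : |(X *ᵥ (βhat - βstar)) i| ≤ 2 * (√n * lam₀) := by
    have : (X *ᵥ (βhat - βstar)) i = (Y i - (X *ᵥ βstar) i) - (Y i - (X *ᵥ βhat) i) := by
      rw [mulVec_sub, Pi.sub_apply]
      ring
    rw [this]
    linarith [abs_sub (Y i - (X *ᵥ βstar) i) (Y i - (X *ᵥ βhat) i), hstar i, hfeas i]
  have hlam₀ : 0 ≤ √n * lam₀ := (abs_nonneg _).trans (hstar ⟨0, hn⟩)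
  have hn' : (0 : ℝ) < n := by exact_mod_cast hn
  calc √(∑ j, (βhat j - βstar j) ^ 2)
      ≤ 2 * (2 * (√n * lam₀)) * colSumNorm X * √S / (n * γ) :=
        sqrt_sum_sq_le_of_inCone hn hsparse hγ hRE (inCone_sub_of_sum_abs_le hl1) hresid
    _ ≤ 2 * (2 * (√n * lam₀)) * (C * √n) * √S / (n * γ) := by gcongr
    _ = 4 * C * lam₀ * √S / γ := by
        field_simp
        rw [sq_sqrt hn'.le]
        ring

end Deterministic

theorem ofReal_one_sub_card_mul_le_measure {Ω ι : Type*} [MeasurableSpace Ω] [Fintype ι]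
    {μ : Measure Ω} [IsProbabilityMeasure μ] {B : ι → Set Ω} {A : Set Ω} {q : ℝ} (hq : 0 ≤ q)
    (hB : ∀ i, μ (B i) ≤ ENNReal.ofReal q) (hA : (⋃ i, B i)ᶜ ⊆ A) :
    ENNReal.ofReal (1 - Fintype.card ι * q) ≤ μ A := by
  have union_bound : μ (⋃ i, B i) ≤ ENNReal.ofReal (Fintype.card ι * q) :=
    calc μ (⋃ i, B i) ≤ ∑ i, μ (B i) := measure_iUnion_fintype_le _ _
      _ ≤ ∑ _i : ι, ENNReal.ofReal q := sum_le_sum fun i _ ↦ hB i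
      _ = ENNReal.ofReal (Fintype.card ι * q) := by
        rw [sum_const, nsmul_eq_mul, ENNReal.ofReal_mul (by positivity), ENNReal.ofReal_natCast,
          card_univ]
  have cover : 1 ≤ μ A + μ (⋃ i, B i) := by
    rw [← measure_univ (μ := μ)]
    exact (measure_mono fun ω _ ↦ (em (ω ∈ ⋃ i, B i)).elim Or.inr fun h ↦ Or.inl (hA h)).trans
      (measure_union_le _ _)
  rw [ENNReal.ofReal_sub _ (by positivity), ENNReal.ofReal_one, tsub_le_iff_right]
  exact cover.trans (by gcongr)

lemma exp_neg_sq_div_eq_rpow {σ x α : ℝ} (hσ : σ ≠ 0) (hx : 1 ≤ x) (hα : 0 ≤ α) :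
    exp (-((σ * √(α * log x)) ^ 2) / (2 * σ ^ 2)) = x ^ (-(α / 2)) := by
  rw [rpow_def_of_pos (by linarith), mul_pow, sq_sqrt (mul_nonneg hα (log_nonneg hx))]
  congr 1
  field_simp

theorem estimation_error_prob_colsum_general
    {Ω : Type*} [MeasureSpace Ω] [IsProbabilityMeasure (ℙ : Measure Ω)]
    (n p : ℕ) (hn : 1 ≤ n) (hp : 2 ≤ p) (σ : ℝ) (hσ : 0 < σ)
    (X : Matrix (Fin n) (Fin p) ℝ) (βstar : Fin p → ℝ)
    (S : ℕ)
    (hsparse : (Finset.univ.filter (fun j => βstar j ≠ 0)).card ≤ S)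
    (C : ℝ)
    (hcolsum : colSumNorm X ≤ C * Real.sqrt n)
    (γ : ℝ) (hγ : 0 < γ)
    (hRE : ∀ ν : Fin p → ℝ, inCone βstar ν →
      γ * ∑ j, (ν j) ^ 2 ≤ (1 / (n : ℝ)) * ∑ i, (X.mulVec ν i) ^ 2)
    (ε : Fin n → Ω → ℝ)
    (hsub : ∀ i, ∀ t : ℝ, 0 ≤ t →
      ℙ {ω | t < |ε i ω|} ≤ ENNReal.ofReal (2 * Real.exp (-(t ^ 2) / (2 * σ ^ 2))))
    (Y : Ω → Fin n → ℝ)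
    (hY : ∀ ω, ∀ i, Y ω i = X.mulVec βstar i + ε i ω)
    (α : ℝ) (hα : 2 < α)
    (lam₀ : ℝ) (hlam₀ : lam₀ = σ * Real.sqrt (α * Real.log p / n)) :
    ENNReal.ofReal (1 - 2 * n * (p : ℝ) ^ (-(α / 2)))
      ≤ ℙ {ω | ∀ βhat : Fin p → ℝ,
            feasible (Y ω) X lam₀ βhat → (∑ j, |βhat j|) ≤ (∑ j, |βstar j|) →
            Real.sqrt (∑ j, (βhat j - βstar j) ^ 2)
              ≤ (4 * C * σ / γ) * Real.sqrt (α * S * Real.log p / n)} := by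
  have hp' : (1 : ℝ) ≤ p := by exact_mod_cast one_le_two.trans hp
  have hα' : 0 ≤ α := by linarith
  have hlog : 0 ≤ α * log p := mul_nonneg hα' (log_nonneg hp')
  have hT : √n * lam₀ = σ * √(α * log p) := by
    rw [hlam₀, sqrt_div hlog]
    field_simp
  have tail (i : Fin n) : ℙ {ω | σ * √(α * log p) < |ε i ω|}
      ≤ ENNReal.ofReal (2 * (p : ℝ) ^ (-(α / 2))) := by
    simpa only [exp_neg_sq_div_eq_rpow hσ.ne' hp' hα'] using
      hsub i (σ * √(α * log p)) (by positivity)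
  have bound : 4 * C * lam₀ * √S / γ = 4 * C * σ / γ * √(α * S * log p / n) := by
    rw [hlam₀, show α * S * log p / n = α * log p / n * S by ring, sqrt_mul' _ (Nat.cast_nonneg S)]
    ring
  refine le_of_eq_of_le (by rw [Fintype.card_fin]; ring_nf)
    (ofReal_one_sub_card_mul_le_measure (by positivity) tail ?_)
  intro ω hω βhat hfeas hl1
  have hstar : feasible (Y ω) X lam₀ βstar := by
    refine (feasible_iff hn).2 fun i ↦ ?_
    simp only [Set.mem_compl_iff, Set.mem_iUnion, not_exists] at hω
    simpa [hY, hT] using hω i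
  exact (sqrt_sum_sq_sub_le_of_feasible hn hsparse hcolsum hγ hRE hstar hfeas hl1).trans_eq bound

/-- Theorem 2, probabilistic form: with probability at least
`1 − 2 n p^{−α/2}`, every feasible `β̂` with `‖β̂‖₁ ≤ ‖β*‖₁` satisfies
`‖β̂ − β*‖₂ ≤ (4Cσ/γ) √(α S log p / n)`. -/
theorem estimation_error_prob_colsum
    {Ω : Type*} [MeasureSpace Ω] [IsProbabilityMeasure (ℙ : Measure Ω)]
    (n p : ℕ) (hn : 1 ≤ n) (hp : 2 ≤ p) (σ : ℝ) (hσ : 0 < σ)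
    (X : Matrix (Fin n) (Fin p) ℝ) (βstar : Fin p → ℝ)
    (S : ℕ) (hS : 0 < S)
    (hsparse : (Finset.univ.filter (fun j => βstar j ≠ 0)).card ≤ S)
    (C : ℝ) (hC : 0 < C)
    (hcolsum : colSumNorm X ≤ C * Real.sqrt n)
    (γ : ℝ) (hγ : 0 < γ)
    (hRE : ∀ ν : Fin p → ℝ, inCone βstar ν →
      γ * ∑ j, (ν j) ^ 2 ≤ (1 / (n : ℝ)) * ∑ i, (X.mulVec ν i) ^ 2)
    (ε : Fin n → Ω → ℝ)
    (hmeas : ∀ i, Measurable (ε i))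
    (hmean : ∀ i, ∫ ω, ε i ω = 0)
    (hindep : iIndepFun ε ℙ)
    (hsub : ∀ i, ∀ t : ℝ, 0 ≤ t →
      ℙ {ω | t < |ε i ω|} ≤ ENNReal.ofReal (2 * Real.exp (-(t ^ 2) / (2 * σ ^ 2))))
    (Y : Ω → Fin n → ℝ)
    (hY : ∀ ω, ∀ i, Y ω i = X.mulVec βstar i + ε i ω)
    (α : ℝ) (hα : 2 < α)
    (lam₀ : ℝ) (hlam₀ : lam₀ = σ * Real.sqrt (α * Real.log p / n)) :
    ENNReal.ofReal (1 - 2 * n * (p : ℝ) ^ (-(α / 2)))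
      ≤ ℙ {ω | ∀ βhat : Fin p → ℝ,
            feasible (Y ω) X lam₀ βhat → (∑ j, |βhat j|) ≤ (∑ j, |βstar j|) →
            Real.sqrt (∑ j, (βhat j - βstar j) ^ 2)
              ≤ (4 * C * σ / γ) * Real.sqrt (α * S * Real.log p / n)} :=
  estimation_error_prob_colsum_general n p hn hp σ hσ X βstar S hsparse C hcolsum γ hγ hRE ε hsub Y
    hY α hα lam₀ hlam₀
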